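/- Let E be a finite-dimensional real inner product space, D ⊆ E a linear subspace, W := ♭(D) ⊆ E*, γ : E* → E* the orthogonal projection onto W with respect to ⟪·,·⟫_*, Γ(q,p) := (q, γ(p)), and ω the canonical symplectic form on E × E*. Let V : E → ℝ be smooth and H : E × E* → ℝ, H(q,p) := ½⟪p,p⟫_* + V(q). For m = (q,w) ∈ E × W define the nonholonomic vector X_nh(m) := (♯w, γ(π₂(X_H(m)))) ∈ E × W, i.e., the unique z ∈ E × W such that ω(z,·) − ω(X_H(m),·) vanishes on {0} × E* and restricts on E × {0} to an element of D° (here X_F(x) is the unique element with ω(X_F(x),·) = DF(x), and ♯ = ♭⁻¹). Then for every smooth f : E × W → ℝ and every m ∈ E × W: Df(m)(X_nh(m)) = {f, H|_{E×W}}_E(m), where {f,g}_E(m) := ω(X_{f∘Γ}(m), X_{g∘Γ}(m)) is the Eden bracket. -/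

import Mathlib

open InnerProductSpace

/-- The canonical symplectic form on `E × E*`: `ω((v,α),(w,β)) = β(v) − α(w)`. -/
def canOmega (E : Type*) [NormedAddCommGroup E] [NormedSpace ℝ E] :
    (E × (E →L[ℝ] ℝ)) → (E × (E →L[ℝ] ℝ)) → ℝ :=
  fun x y => y.2 x.1 - x.2 y.1

/-- The inner product `⟪·,·⟫_*` induced on the dual `E*` by the musical isomorphism:
`⟪α,β⟫_* = ⟪♯α, ♯β⟫`. -/
noncomputable def dualInner {E : Type*} [NormedAddCommGroup E] [InnerProductSpace ℝ E]
    [FiniteDimensional ℝ E] (α β : E →L[ℝ] ℝ) : ℝ :=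
  inner ℝ ((InnerProductSpace.toDual ℝ E).symm α) ((InnerProductSpace.toDual ℝ E).symm β)

/-- The Eden bracket on `E × W`:
`{f,g}_E(m) := ω(X_{f∘Γ}(m), X_{g∘Γ}(m))`, with `Γ(q,p) = (q, γ(p))`. -/
noncomputable def edenBracket (E : Type*) [NormedAddCommGroup E] [InnerProductSpace ℝ E]
    [FiniteDimensional ℝ E] (W : Submodule ℝ (E →L[ℝ] ℝ))
    (γ : (E →L[ℝ] ℝ) → (E →L[ℝ] ℝ)) (hγW : ∀ α, γ α ∈ W)
    (XF : (E × (E →L[ℝ] ℝ) → ℝ) → E × (E →L[ℝ] ℝ) → E × (E →L[ℝ] ℝ))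
    (f g : E × ↥W → ℝ) (m : E × ↥W) : ℝ :=
  canOmega E
    (XF (fun x => f (x.1, ⟨γ x.2, hγW x.2⟩)) (m.1, ↑m.2))
    (XF (fun x => g (x.1, ⟨γ x.2, hγW x.2⟩)) (m.1, ↑m.2))

/-! Since `γ` is the `⟪·,·⟫_*`-orthogonal projection onto `W`, it is `♭ ∘ P ∘ ♯` with `P` the
orthogonal projection of `E` onto `♯W`; in particular `Γ` is continuous linear, so
`ω(X_{f∘Γ}(m), z) = D(f∘Γ)(m) z = Df(m)(Γ z)` and the Eden bracket equals `Df(m)(Γ X_{H∘Γ}(m))`.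
For `m = (q, w)` with `w ∈ W`, precomposing `H` with `(q, p) ↦ (q, γ p)` does not change `DH(m)`,
because `γ w = w` and `(γ β)(♯w) = β(♯w)`; hence `X_{H∘Γ}(m) = X_H(m) = (♯w, -DV(q))`, and
`Γ X_H(m) = X_nh(m)`. -/

section Symplectic

variable {E : Type*} [NormedAddCommGroup E] [NormedSpace ℝ E]

theorem eq_of_forall_canOmega_eq {z z' : E × (E →L[ℝ] ℝ)}
    (h : ∀ u, canOmega E z u = canOmega E z' u) : z = z' := by
  refine Prod.ext ((SeparatingDual.eq_iff_forall_dual_eq (R := ℝ)).2 fun β => ?_) ?_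
  · simpa [canOmega] using h (0, β)
  · ext v
    simpa [canOmega] using h (v, 0)

def IsHamiltonianVectorField
    (XF : (E × (E →L[ℝ] ℝ) → ℝ) → E × (E →L[ℝ] ℝ) → E × (E →L[ℝ] ℝ)) : Prop :=
  ∀ (F : E × (E →L[ℝ] ℝ) → ℝ) (x : E × (E →L[ℝ] ℝ)), DifferentiableAt ℝ F x →
    ∀ u, canOmega E (XF F x) u = fderiv ℝ F x u

variable {XF : (E × (E →L[ℝ] ℝ) → ℝ) → E × (E →L[ℝ] ℝ) → E × (E →L[ℝ] ℝ)}

theorem IsHamiltonianVectorField.eq_of_hasFDerivAt (hXF : IsHamiltonianVectorField XF)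
    {F : E × (E →L[ℝ] ℝ) → ℝ} {x z : E × (E →L[ℝ] ℝ)} {Φ : E × (E →L[ℝ] ℝ) →L[ℝ] ℝ}
    (hF : HasFDerivAt F Φ x) (hz : ∀ u, canOmega E z u = Φ u) : XF F x = z :=
  eq_of_forall_canOmega_eq fun u => by rw [hXF F x hF.differentiableAt, hF.fderiv, hz]

theorem IsHamiltonianVectorField.comp_eq (hXF : IsHamiltonianVectorField XF)
    {F : E × (E →L[ℝ] ℝ) → ℝ} {x : E × (E →L[ℝ] ℝ)} {Φ : E × (E →L[ℝ] ℝ) →L[ℝ] ℝ}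
    {A : E × (E →L[ℝ] ℝ) →L[ℝ] E × (E →L[ℝ] ℝ)}
    (hF : HasFDerivAt F Φ x) (hAx : A x = x) (hΦA : Φ ∘L A = Φ) :
    XF (F ∘ A) x = XF F x := by
  refine hXF.eq_of_hasFDerivAt (Φ := Φ) ?_ fun u => ?_
  · rw [← hΦA]
    exact (hAx ▸ hF).comp x A.hasFDerivAt
  · rw [hXF F x hF.differentiableAt, hF.fderiv]

end Symplectic

section DualInner

variable {E : Type*} [NormedAddCommGroup E] [InnerProductSpace ℝ E] [FiniteDimensional ℝ E]

noncomputable def dualStarProjection (W : Submodule ℝ (E →L[ℝ] ℝ)) :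
    (E →L[ℝ] ℝ) →L[ℝ] (E →L[ℝ] ℝ) :=
  (toDual ℝ E).toContinuousLinearEquiv.toContinuousLinearMap ∘L
    (W.comap (toDualMap ℝ E).toLinearMap).starProjection ∘L
    (toDual ℝ E).symm.toContinuousLinearEquiv.toContinuousLinearMap

variable {W : Submodule ℝ (E →L[ℝ] ℝ)}

theorem toDual_symm_mem_comap_toDualMap_iff {α : E →L[ℝ] ℝ} :
    (toDual ℝ E).symm α ∈ W.comap (toDualMap ℝ E).toLinearMap ↔ α ∈ W := by
  rw [Submodule.mem_comap]
  exact Iff.of_eq (congrArg (· ∈ W) ((toDual ℝ E).apply_symm_apply α))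

theorem eq_dualStarProjection {γ : (E →L[ℝ] ℝ) → (E →L[ℝ] ℝ)}
    (hγW : ∀ α, γ α ∈ W) (hγorth : ∀ α, ∀ w ∈ W, dualInner (α - γ α) w = 0) :
    γ = dualStarProjection W := by
  funext α
  have h : (W.comap (toDualMap ℝ E).toLinearMap).starProjection ((toDual ℝ E).symm α) =
      (toDual ℝ E).symm (γ α) := by
    refine Submodule.eq_starProjection_of_mem_of_inner_eq_zero
      (toDual_symm_mem_comap_toDualMap_iff.2 (hγW α)) fun v hv => ?_
    have h : dualInner (α - γ α) (toDual ℝ E v) = 0 := hγorth α _ hv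
    rwa [dualInner, map_sub, LinearIsometryEquiv.symm_apply_apply] at h
  simp [dualStarProjection, h]

theorem dualStarProjection_apply_of_mem {p : E →L[ℝ] ℝ} (hp : p ∈ W) :
    dualStarProjection W p = p := by
  simp [dualStarProjection,
    Submodule.starProjection_eq_self_iff.2 (toDual_symm_mem_comap_toDualMap_iff.2 hp)]

theorem dualStarProjection_apply_sharp {p : E →L[ℝ] ℝ} (hp : p ∈ W) (β : E →L[ℝ] ℝ) :
    dualStarProjection W β ((toDual ℝ E).symm p) = β ((toDual ℝ E).symm p) := by
  have h := Submodule.inner_starProjection_left_eq_right (W.comap (toDualMap ℝ E).toLinearMap)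
    ((toDual ℝ E).symm β) ((toDual ℝ E).symm p)
  rw [Submodule.starProjection_eq_self_iff.2 (toDual_symm_mem_comap_toDualMap_iff.2 hp),
    toDual_symm_apply] at h
  simpa [dualStarProjection] using h

noncomputable def mechanicalHamiltonian (V : E → ℝ) (x : E × (E →L[ℝ] ℝ)) : ℝ :=
  (1 / 2 : ℝ) * dualInner x.2 x.2 + V x.1

theorem hasFDerivAt_mechanicalHamiltonian {V : E → ℝ} {q : E} (hV : DifferentiableAt ℝ V q)
    (p : E →L[ℝ] ℝ) :
    HasFDerivAt (mechanicalHamiltonian V)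
      (ContinuousLinearMap.apply ℝ ℝ ((toDual ℝ E).symm p) ∘L ContinuousLinearMap.snd ℝ E _ +
        fderiv ℝ V q ∘L ContinuousLinearMap.fst ℝ E _) (q, p) := by
  have hsharp := ((toDual ℝ E).symm.toContinuousLinearEquiv.toContinuousLinearMap ∘L
    ContinuousLinearMap.snd ℝ E (E →L[ℝ] ℝ)).hasFDerivAt (x := (q, p))
  refine (((hsharp.inner ℝ hsharp).const_mul (1 / 2 : ℝ)).add
    (hV.hasFDerivAt.comp (q, p) hasFDerivAt_fst)).congr_fderiv ?_
  ext u
  · simp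
  · simp [fderivInnerCLM_apply, -toDual_symm_apply]
    rw [real_inner_comm ((toDual ℝ E).symm u), toDual_symm_apply]
    ring

variable {XF : (E × (E →L[ℝ] ℝ) → ℝ) → E × (E →L[ℝ] ℝ) → E × (E →L[ℝ] ℝ)}
  {V : E → ℝ} {q : E}

theorem hamiltonianVector_mechanicalHamiltonian (hXF : IsHamiltonianVectorField XF)
    (hV : DifferentiableAt ℝ V q) (p : E →L[ℝ] ℝ) :
    XF (mechanicalHamiltonian V) (q, p) = ((toDual ℝ E).symm p, -fderiv ℝ V q) :=
  hXF.eq_of_hasFDerivAt (hasFDerivAt_mechanicalHamiltonian hV p) fun u => by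
    simp [canOmega]

theorem hamiltonianVector_mechanicalHamiltonian_comp_dualStarProjection
    (hXF : IsHamiltonianVectorField XF)
    (hV : DifferentiableAt ℝ V q) {p : E →L[ℝ] ℝ} (hp : p ∈ W) :
    XF (mechanicalHamiltonian V ∘
        (ContinuousLinearMap.id ℝ E).prodMap (dualStarProjection W)) (q, p) =
      XF (mechanicalHamiltonian V) (q, p) :=
  hXF.comp_eq (hasFDerivAt_mechanicalHamiltonian hV p)
    (by simp [dualStarProjection_apply_of_mem hp])
    (by ext u <;> simp [dualStarProjection_apply_sharp hp])

end DualInner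

theorem eden_bracket_governs_nonholonomic_evolution_general
    (E : Type*) [NormedAddCommGroup E] [InnerProductSpace ℝ E] [FiniteDimensional ℝ E]
    (W : Submodule ℝ (E →L[ℝ] ℝ))
    -- `γ` is the orthogonal projection of `E*` onto `W` w.r.t. the dual inner product:
    (γ : (E →L[ℝ] ℝ) → (E →L[ℝ] ℝ))
    (hγW : ∀ α, γ α ∈ W)
    (hγorth : ∀ α, ∀ w ∈ W, dualInner (α - γ α) w = 0)
    -- `X_F(x)` is the (unique) Hamiltonian vector of `F` at `x`:
    (XF : (E × (E →L[ℝ] ℝ) → ℝ) → E × (E →L[ℝ] ℝ) → E × (E →L[ℝ] ℝ))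
    (hXF : ∀ (F : E × (E →L[ℝ] ℝ) → ℝ) (x : E × (E →L[ℝ] ℝ)), DifferentiableAt ℝ F x →
      ∀ u, canOmega E (XF F x) u = fderiv ℝ F x u)
    (V : E → ℝ) (hV : ContDiff ℝ (⊤ : ℕ∞) V)
    (H : E × (E →L[ℝ] ℝ) → ℝ)
    (hH : ∀ x : E × (E →L[ℝ] ℝ), H x = (1 / 2 : ℝ) * dualInner x.2 x.2 + V x.1) :
    ∀ f : E × ↥W → ℝ, ContDiff ℝ (⊤ : ℕ∞) f → ∀ m : E × ↥W,
      fderiv ℝ f m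
        ((InnerProductSpace.toDual ℝ E).symm ↑m.2,
          (⟨γ ((XF H (m.1, ↑m.2)).2), hγW _⟩ : ↥W)) =
      edenBracket E W γ hγW XF f (fun m' : E × ↥W => H (m'.1, ↑m'.2)) m := by
  rintro f hf ⟨q, p, hp⟩
  obtain rfl : γ = dualStarProjection W := eq_dualStarProjection hγW hγorth
  obtain rfl : H = mechanicalHamiltonian V := funext hH
  have hVq : DifferentiableAt ℝ V q := hV.differentiable (by simp) q
  set Γ : E × (E →L[ℝ] ℝ) →L[ℝ] E × W :=
    (ContinuousLinearMap.id ℝ E).prodMap ((dualStarProjection W).codRestrict W hγW)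
  have hΓ : Γ (q, p) = (q, ⟨p, hp⟩) :=
    Prod.ext rfl (Subtype.ext (dualStarProjection_apply_of_mem hp))
  have hf' : HasFDerivAt f (fderiv ℝ f (q, ⟨p, hp⟩)) (Γ (q, p)) :=
    hΓ ▸ (hf.differentiable (by simp) _).hasFDerivAt
  -- Naming the spaces makes elaboration match the module structure on `E × W` carried by `Γ`
  -- with the normed one used by `fderiv ℝ f`.
  have hfΓ : HasFDerivAt (f ∘ Γ) (fderiv ℝ f (q, ⟨p, hp⟩) ∘L Γ) (q, p) :=
    HasFDerivAt.comp (𝕜 := ℝ) (E := E × (E →L[ℝ] ℝ)) (F := E × W) (G := ℝ) (q, p) hf'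
      (Γ.hasFDerivAt (𝕜 := ℝ) (F := E × W))
  calc _ = (fderiv ℝ f (q, ⟨p, hp⟩) ∘L Γ) (XF (mechanicalHamiltonian V) (q, p)) := by
        rw [hamiltonianVector_mechanicalHamiltonian hXF hVq]; rfl
    _ = canOmega E (XF (f ∘ Γ) (q, p)) (XF (mechanicalHamiltonian V) (q, p)) := by
        rw [hXF _ _ hfΓ.differentiableAt, hfΓ.fderiv]
    _ = _ := by
        rw [← hamiltonianVector_mechanicalHamiltonian_comp_dualStarProjection hXF hVq hp]
        rfl

/-- For the mechanical Hamiltonian `H(q,p) = ½⟪p,p⟫_* + V(q)` and the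
nonholonomic vector `X_nh(m) := (♯w, γ(π₂(X_H(m)))) ∈ E × W` at `m = (q,w) ∈ E × W`, the Eden
bracket governs the nonholonomic evolution: for every smooth `f : E × W → ℝ` and every
`m ∈ E × W`, `Df(m)(X_nh(m)) = {f, H|_{E×W}}_E(m)`. -/
theorem eden_bracket_governs_nonholonomic_evolution
    (E : Type*) [NormedAddCommGroup E] [InnerProductSpace ℝ E] [FiniteDimensional ℝ E]
    (D : Submodule ℝ E)
    (W : Submodule ℝ (E →L[ℝ] ℝ))
    (hW : W = Submodule.map (InnerProductSpace.toDual ℝ E).toLinearEquiv.toLinearMap D)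
    -- `γ` is the orthogonal projection of `E*` onto `W` w.r.t. the dual inner product:
    (γ : (E →L[ℝ] ℝ) → (E →L[ℝ] ℝ))
    (hγW : ∀ α, γ α ∈ W)
    (hγorth : ∀ α, ∀ w ∈ W, dualInner (α - γ α) w = 0)
    -- `X_F(x)` is the (unique) Hamiltonian vector of `F` at `x`:
    (XF : (E × (E →L[ℝ] ℝ) → ℝ) → E × (E →L[ℝ] ℝ) → E × (E →L[ℝ] ℝ))
    (hXF : ∀ (F : E × (E →L[ℝ] ℝ) → ℝ) (x : E × (E →L[ℝ] ℝ)), DifferentiableAt ℝ F x →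
      ∀ u, canOmega E (XF F x) u = fderiv ℝ F x u)
    (V : E → ℝ) (hV : ContDiff ℝ (⊤ : ℕ∞) V)
    (H : E × (E →L[ℝ] ℝ) → ℝ)
    (hH : ∀ x : E × (E →L[ℝ] ℝ), H x = (1 / 2 : ℝ) * dualInner x.2 x.2 + V x.1) :
    ∀ f : E × ↥W → ℝ, ContDiff ℝ (⊤ : ℕ∞) f → ∀ m : E × ↥W,
      fderiv ℝ f m
        ((InnerProductSpace.toDual ℝ E).symm ↑m.2,
          (⟨γ ((XF H (m.1, ↑m.2)).2), hγW _⟩ : ↥W)) =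
      edenBracket E W γ hγW XF f (fun m' : E × ↥W => H (m'.1, ↑m'.2)) m :=
  eden_bracket_governs_nonholonomic_evolution_general E W γ hγW hγorth XF hXF V hV H hH
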